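/- arXiv:0811.2289 — 3 statements merged into one kernel-verified Lean document; each statement's English description precedes it below -/
import Mathlib

section
/- For all matrices A and B in SU(2,1), tr(ABAB⁻¹) = tr(AB)·conj(tr(A⁻¹B)) + conj(tr(AB))·(tr B) + conj(tr B)·tr(A⁻¹B) + conj(tr A)·(1 − |tr B|²), where |tr B|² = (tr B)·conj(tr B). -/
open Matrix

/-- The matrix of the Hermitian form of signature (2,1) on ℂ³. -/
def formJ : Matrix (Fin 3) (Fin 3) ℂ := Matrix.diagonal ![1, 1, -1]

/-- A matrix belongs to SU(2,1) iff it has determinant 1 and preserves the form `formJ`. -/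
def SU21 (A : Matrix (Fin 3) (Fin 3) ℂ) : Prop :=
  A.det = 1 ∧ Aᴴ * formJ * A = formJ

set_option maxHeartbeats 1600000 in
theorem su21_trace_ABABinv (A B : Matrix (Fin 3) (Fin 3) ℂ) (hA : SU21 A) (hB : SU21 B) :
    (A * B * A * B⁻¹).trace =
      (A * B).trace * star ((A⁻¹ * B).trace) + star ((A * B).trace) * B.trace
        + star B.trace * (A⁻¹ * B).trace
        + star A.trace * (1 - B.trace * star B.trace) := by
  obtain ⟨hA1, hA2⟩ := hA
  obtain ⟨hB1, hB2⟩ := hB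
  have hJJ : formJ * formJ = 1 := by
    ext i j
    fin_cases i <;> fin_cases j <;>
      simp [formJ, Matrix.mul_apply, Fin.sum_univ_three, Matrix.one_apply]
  have hJJ' : ∀ X : Matrix (Fin 3) (Fin 3) ℂ, formJ * (formJ * X) = X := by
    intro X; rw [← Matrix.mul_assoc, hJJ, Matrix.one_mul]
  have hAu : IsUnit A.det := by rw [hA1]; exact isUnit_one
  have hBu : IsUnit B.det := by rw [hB1]; exact isUnit_one
  have hAH : Aᴴ = formJ * A⁻¹ * formJ := by
    have h1 : Aᴴ * formJ = formJ * A⁻¹ := by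
      calc Aᴴ * formJ = Aᴴ * formJ * (A * A⁻¹) := by
            rw [Matrix.mul_nonsing_inv A hAu, Matrix.mul_one]
        _ = (Aᴴ * formJ * A) * A⁻¹ := by simp only [Matrix.mul_assoc]
        _ = formJ * A⁻¹ := by rw [hA2]
    calc Aᴴ = Aᴴ * (formJ * formJ) := by rw [hJJ, Matrix.mul_one]
      _ = (Aᴴ * formJ) * formJ := by rw [Matrix.mul_assoc]
      _ = formJ * A⁻¹ * formJ := by rw [h1]
  have hBH : Bᴴ = formJ * B⁻¹ * formJ := by
    have h1 : Bᴴ * formJ = formJ * B⁻¹ := by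
      calc Bᴴ * formJ = Bᴴ * formJ * (B * B⁻¹) := by
            rw [Matrix.mul_nonsing_inv B hBu, Matrix.mul_one]
        _ = (Bᴴ * formJ * B) * B⁻¹ := by simp only [Matrix.mul_assoc]
        _ = formJ * B⁻¹ := by rw [hB2]
    calc Bᴴ = Bᴴ * (formJ * formJ) := by rw [hJJ, Matrix.mul_one]
      _ = (Bᴴ * formJ) * formJ := by rw [Matrix.mul_assoc]
      _ = formJ * B⁻¹ * formJ := by rw [h1]
  have hAiH : (A⁻¹)ᴴ = formJ * A * formJ := by
    rw [Matrix.conjTranspose_nonsing_inv]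
    apply Matrix.inv_eq_right_inv
    rw [hAH]
    calc formJ * A⁻¹ * formJ * (formJ * A * formJ)
        = formJ * (A⁻¹ * (formJ * (formJ * (A * formJ)))) := by
          simp only [Matrix.mul_assoc]
      _ = formJ * (A⁻¹ * (A * formJ)) := by rw [hJJ']
      _ = formJ * (A⁻¹ * A * formJ) := by rw [Matrix.mul_assoc]
      _ = formJ * formJ := by rw [Matrix.nonsing_inv_mul A hAu, Matrix.one_mul]
      _ = 1 := hJJ
  have key : ∀ X : Matrix (Fin 3) (Fin 3) ℂ, (formJ * X * formJ).trace = X.trace := by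
    intro X
    rw [Matrix.trace_mul_cycle, hJJ, Matrix.one_mul]
  have key2 : ∀ X Y : Matrix (Fin 3) (Fin 3) ℂ,
      (formJ * X * formJ * (formJ * Y * formJ)).trace = (X * Y).trace := by
    intro X Y
    have h : formJ * X * formJ * (formJ * Y * formJ) = formJ * (X * Y) * formJ := by
      simp only [Matrix.mul_assoc, hJJ']
    rw [h, key]
  have s1 : star ((A * B).trace) = (B⁻¹ * A⁻¹).trace := by
    rw [← Matrix.trace_conjTranspose, Matrix.conjTranspose_mul, hAH, hBH, key2]
  have s2 : star ((A⁻¹ * B).trace) = (B⁻¹ * A).trace := by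
    rw [← Matrix.trace_conjTranspose, Matrix.conjTranspose_mul, hAiH, hBH, key2]
  have s3 : star B.trace = B⁻¹.trace := by
    rw [← Matrix.trace_conjTranspose, hBH, key]
  have s4 : star A.trace = A⁻¹.trace := by
    rw [← Matrix.trace_conjTranspose, hAH, key]
  rw [s1, s2, s3, s4]
  have hAadj : A⁻¹ = A.adjugate := by rw [Matrix.inv_def, hA1]; simp
  have hBadj : B⁻¹ = B.adjugate := by rw [Matrix.inv_def, hB1]; simp
  rw [hAadj, hBadj]
  rw [Matrix.det_fin_three] at hB1
  simp only [Matrix.trace_fin_three, Matrix.adjugate_fin_three, Matrix.mul_apply,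
    Fin.sum_univ_three, Matrix.cons_val', Matrix.cons_val_zero, Matrix.cons_val_one,
    Matrix.head_cons, Matrix.empty_val', Matrix.cons_val_fin_one, Matrix.head_fin_const,
    Matrix.cons_val_two, Matrix.tail_cons, Matrix.of_apply]
  linear_combination (A 0 0 * A 1 1 - A 0 1 * A 1 0 + A 0 0 * A 2 2 - A 0 2 * A 2 0
    + A 1 1 * A 2 2 - A 1 2 * A 2 1) * hB1
end

section
/- For all matrices A and B in SU(2,1), tr(ABA²B²) = tr([A,B]) + tr(AB)·tr(A²B²) − tr(AB)·conj(tr(AB)), where [A,B] denotes the commutator ABA⁻¹B⁻¹. -/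
open Matrix

/-- Cayley–Hamilton for 3×3 complex matrices, explicit form. -/
lemma ch3 (E : Matrix (Fin 3) (Fin 3) ℂ) :
    E * E * E - E.trace • (E * E) + (E.adjugate).trace • E
      = E.det • (1 : Matrix (Fin 3) (Fin 3) ℂ) := by
  ext i j
  fin_cases i <;> fin_cases j <;>
    simp [Matrix.mul_apply, Matrix.det_fin_three, Matrix.adjugate_fin_three,
      Matrix.trace, Matrix.diag, Fin.sum_univ_succ, Matrix.one_apply] <;> ring

lemma formJ_mul_formJ : formJ * formJ = 1 := by
  ext i j
  fin_cases i <;> fin_cases j <;>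
    simp [formJ, Matrix.mul_apply, Fin.sum_univ_succ, Matrix.one_apply]

/-- For a matrix preserving the form, the inverse is `J Mᴴ J`, hence has conjugate trace. -/
lemma su21_trace_inv (M : Matrix (Fin 3) (Fin 3) ℂ) (h : Mᴴ * formJ * M = formJ) :
    (M⁻¹).trace = star M.trace := by
  have hinv : M⁻¹ = formJ * Mᴴ * formJ := by
    apply Matrix.inv_eq_left_inv
    calc formJ * Mᴴ * formJ * M = formJ * (Mᴴ * formJ * M) := by
          simp only [Matrix.mul_assoc]
      _ = formJ * formJ := by rw [h]
      _ = 1 := formJ_mul_formJ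
  rw [hinv, Matrix.trace_mul_cycle, formJ_mul_formJ, Matrix.one_mul,
    Matrix.trace_conjTranspose]

theorem su21_trace_ABAABB (A B : Matrix (Fin 3) (Fin 3) ℂ) (hA : SU21 A) (hB : SU21 B) :
    (A * B * A ^ 2 * B ^ 2).trace =
      (A * B * A⁻¹ * B⁻¹).trace + (A * B).trace * (A ^ 2 * B ^ 2).trace
        - (A * B).trace * star ((A * B).trace) := by
  obtain ⟨hdA, hJA⟩ := hA
  obtain ⟨hdB, hJB⟩ := hB
  set C := A * B with hC
  set E := B * A with hE
  -- E preserves the form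
  have hJE : Eᴴ * formJ * E = formJ := by
    calc Eᴴ * formJ * E = Aᴴ * (Bᴴ * formJ * B) * A := by
          simp [hE, Matrix.conjTranspose_mul, Matrix.mul_assoc]
      _ = Aᴴ * formJ * A := by rw [hJB]
      _ = formJ := hJA
  have hdE : E.det = 1 := by rw [hE, Matrix.det_mul, hdA, hdB, mul_one]
  have hdEu : IsUnit E.det := by rw [hdE]; exact isUnit_one
  -- trace of E⁻¹ is the conjugate of trace of C
  have hq : (E⁻¹).trace = star C.trace := by
    rw [su21_trace_inv E hJE, hE, Matrix.trace_mul_comm, ← hC]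
  -- E⁻¹ equals the adjugate, so its trace is the adjugate's trace
  have hadj : E⁻¹ = E.adjugate := by
    rw [Matrix.inv_def, hdE, Ring.inverse_one, one_smul]
  -- Cayley–Hamilton rearranged: E⁻¹ = E² − tr(E)•E + tr(E⁻¹)•1
  have hCH : E⁻¹ = E * E - E.trace • E + (E⁻¹).trace • (1 : Matrix (Fin 3) (Fin 3) ℂ) := by
    have h1 : E * E * E - E.trace • (E * E) + (E⁻¹).trace • E = 1 := by
      rw [hadj]
      simpa [hdE] using ch3 E
    have hiE : E⁻¹ * E = 1 := Matrix.nonsing_inv_mul E hdEu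
    calc E⁻¹ = E⁻¹ * 1 := by rw [Matrix.mul_one]
      _ = E⁻¹ * (E * E * E - E.trace • (E * E) + (E⁻¹).trace • E) := by rw [h1]
      _ = E⁻¹ * E * (E * E) - E.trace • (E⁻¹ * E * E) + (E⁻¹).trace • (E⁻¹ * E) := by
          rw [mul_add, mul_sub, mul_smul_comm, mul_smul_comm]
          simp only [Matrix.mul_assoc]
      _ = E * E - E.trace • E + (E⁻¹).trace • (1 : Matrix (Fin 3) (Fin 3) ℂ) := by
          rw [hiE, Matrix.one_mul, Matrix.one_mul]
  -- trace of E equals trace of C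
  have htE : E.trace = C.trace := by rw [hE, hC, Matrix.trace_mul_comm]
  -- rewrite the commutator trace
  have hcomm : A * B * A⁻¹ * B⁻¹ = C * E⁻¹ := by
    rw [hC, hE, Matrix.mul_inv_rev, Matrix.mul_assoc]
  -- the three trace computations
  have t1 : (C * (E * E)).trace = (A * B * A ^ 2 * B ^ 2).trace := by
    have e1 : C * (E * E) = (A * B * B * A * B) * A := by
      rw [hC, hE]; noncomm_ring
    have e2 : A * (A * B * B * A * B) = (A ^ 2 * B ^ 2) * (A * B) := by noncomm_ring
    rw [e1, Matrix.trace_mul_comm, e2, Matrix.trace_mul_comm, ← Matrix.mul_assoc]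
  have t2 : (C * E).trace = (A ^ 2 * B ^ 2).trace := by
    have e1 : C * E = (A * B * B) * A := by rw [hC, hE]; noncomm_ring
    have e2 : A * (A * B * B) = A ^ 2 * B ^ 2 := by noncomm_ring
    rw [e1, Matrix.trace_mul_comm, e2]
  -- put it together
  rw [hcomm, hCH, mul_add, mul_sub, mul_smul_comm, mul_smul_comm,
    mul_one, Matrix.trace_add, Matrix.trace_sub, Matrix.trace_smul, Matrix.trace_smul,
    t1, t2, htE, hq]
  simp only [smul_eq_mul, ← hC]
  ring
end

section
/- Let A and B be matrices in SU(2,1) and set a = tr A, b = tr B, c = tr(AB), d = tr(A⁻¹B). Then the real part of tr([A,B]), where [A,B] = ABA⁻¹B⁻¹, equals (1/2)·(|ab|² + |a|² + |b|² + |c|² + |d|² − ab·conj(c) − conj(ab)·c − a·conj(b)·d − conj(a)·b·conj(d) − 3). -/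
open Matrix

lemma su21_inv {A : Matrix (Fin 3) (Fin 3) ℂ} (hA : SU21 A) :
    A⁻¹ = formJ * Aᴴ * formJ := by
  apply Matrix.inv_eq_left_inv
  calc formJ * Aᴴ * formJ * A = formJ * (Aᴴ * formJ * A) := by
        rw [Matrix.mul_assoc, Matrix.mul_assoc, Matrix.mul_assoc]
    _ = formJ * formJ := by rw [hA.2]
    _ = 1 := formJ_mul_formJ

lemma su21_trace_inv_s9 {A : Matrix (Fin 3) (Fin 3) ℂ} (hA : SU21 A) :
    (A⁻¹).trace = star A.trace := by
  rw [su21_inv hA, ← Matrix.trace_conjTranspose, Matrix.trace_mul_cycle,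
    formJ_mul_formJ, Matrix.one_mul]

lemma su21_mul {A B : Matrix (Fin 3) (Fin 3) ℂ} (hA : SU21 A) (hB : SU21 B) :
    SU21 (A * B) := by
  refine ⟨by rw [Matrix.det_mul, hA.1, hB.1, one_mul], ?_⟩
  rw [Matrix.conjTranspose_mul]
  calc Bᴴ * Aᴴ * formJ * (A * B) = Bᴴ * (Aᴴ * formJ * A) * B := by
        simp only [Matrix.mul_assoc]
    _ = Bᴴ * formJ * B := by rw [hA.2]
    _ = formJ := hB.2

lemma su21_AJAh {A : Matrix (Fin 3) (Fin 3) ℂ} (hA : SU21 A) :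
    A * formJ * Aᴴ = formJ := by
  have h1 : A * A⁻¹ = 1 := Matrix.mul_nonsing_inv A (by rw [hA.1]; exact isUnit_one)
  rw [su21_inv hA] at h1
  have h2 : A * (formJ * Aᴴ * formJ) * formJ = formJ := by rw [h1, Matrix.one_mul]
  calc A * formJ * Aᴴ = A * (formJ * Aᴴ * formJ) * formJ := by
        simp only [Matrix.mul_assoc, formJ_mul_formJ, Matrix.mul_one]
    _ = formJ := h2

lemma su21_inv_mem {A : Matrix (Fin 3) (Fin 3) ℂ} (hA : SU21 A) :
    SU21 A⁻¹ := by
  have hdet : (A⁻¹).det = 1 := by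
    rw [Matrix.det_nonsing_inv, hA.1]; simp
  refine ⟨hdet, ?_⟩
  have hct : (A⁻¹)ᴴ = formJ * A * formJ := by
    rw [su21_inv hA]
    simp only [Matrix.conjTranspose_mul, Matrix.conjTranspose_conjTranspose]
    have hJ : formJᴴ = formJ := by
      ext i j; fin_cases i <;> fin_cases j <;> simp [formJ]
    rw [hJ, Matrix.mul_assoc]
  rw [hct, su21_inv hA]
  calc formJ * A * formJ * formJ * (formJ * Aᴴ * formJ)
      = formJ * (A * formJ * Aᴴ) * formJ := by
        simp only [Matrix.mul_assoc, formJ_mul_formJ, Matrix.mul_one, Matrix.one_mul]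
    _ = formJ * formJ * formJ := by rw [su21_AJAh hA, Matrix.mul_assoc]
    _ = formJ := by rw [formJ_mul_formJ, Matrix.one_mul]

lemma det_of_fin_three (a b c d e f g h i : ℂ) :
    (!![a,b,c;d,e,f;g,h,i]).det = a*e*i - a*f*h - b*d*i + b*f*g + c*d*h - c*e*g := by
  simp [Matrix.det_fin_three]

set_option maxHeartbeats 1000000 in
lemma key_aux (a11 a12 a13 a21 a22 a23 a31 a32 a33
    b11 b12 b13 b21 b22 b23 b31 b32 b33 : ℂ) :
    letI A : Matrix (Fin 3) (Fin 3) ℂ := !![a11,a12,a13;a21,a22,a23;a31,a32,a33]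
    letI B : Matrix (Fin 3) (Fin 3) ℂ := !![b11,b12,b13;b21,b22,b23;b31,b32,b33]
    (A*B*A.adjugate*B.adjugate).trace + (B*A*B.adjugate*A.adjugate).trace =
      A.trace * A.adjugate.trace * B.trace * B.adjugate.trace
      + A.trace * A.adjugate.trace * B.det + B.trace * B.adjugate.trace * A.det
      + (A*B).trace * (B.adjugate*A.adjugate).trace
      + (A.adjugate*B).trace * (A*B.adjugate).trace
      - A.trace * B.trace * (B.adjugate*A.adjugate).trace
      - A.adjugate.trace * B.adjugate.trace * (A*B).trace
      - A.trace * B.adjugate.trace * (A.adjugate*B).trace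
      - A.adjugate.trace * B.trace * (A*B.adjugate).trace
      - 3 * A.det * B.det := by
  simp only [Matrix.adjugate_fin_three_of, Matrix.mul_fin_three, Matrix.trace_fin_three_of,
    det_of_fin_three]
  ring

lemma key (A B : Matrix (Fin 3) (Fin 3) ℂ) :
    (A*B*A.adjugate*B.adjugate).trace + (B*A*B.adjugate*A.adjugate).trace =
      A.trace * A.adjugate.trace * B.trace * B.adjugate.trace
      + A.trace * A.adjugate.trace * B.det + B.trace * B.adjugate.trace * A.det
      + (A*B).trace * (B.adjugate*A.adjugate).trace
      + (A.adjugate*B).trace * (A*B.adjugate).trace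
      - A.trace * B.trace * (B.adjugate*A.adjugate).trace
      - A.adjugate.trace * B.adjugate.trace * (A*B).trace
      - A.trace * B.adjugate.trace * (A.adjugate*B).trace
      - A.adjugate.trace * B.trace * (A*B.adjugate).trace
      - 3 * A.det * B.det := by
  rw [Matrix.eta_fin_three A, Matrix.eta_fin_three B]
  exact key_aux (A 0 0) (A 0 1) (A 0 2) (A 1 0) (A 1 1) (A 1 2) (A 2 0) (A 2 1) (A 2 2)
    (B 0 0) (B 0 1) (B 0 2) (B 1 0) (B 1 1) (B 1 2) (B 2 0) (B 2 1) (B 2 2)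

theorem su21_re_trace_commutator (A B : Matrix (Fin 3) (Fin 3) ℂ)
    (hA : SU21 A) (hB : SU21 B) (a b c d : ℂ)
    (ha : a = A.trace) (hb : b = B.trace) (hc : c = (A * B).trace)
    (hd : d = (A⁻¹ * B).trace) :
    ((((A * B * A⁻¹ * B⁻¹).trace).re : ℂ)) =
      (1 / 2) * ((a * b) * star (a * b) + a * star a + b * star b + c * star c + d * star d
        - a * b * star c - star (a * b) * c - a * star b * d - star a * b * star d - 3) := by
  have hdA : IsUnit A.det := by rw [hA.1]; exact isUnit_one
  have hdB : IsUnit B.det := by rw [hB.1]; exact isUnit_one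
  have hiA : A⁻¹ = A.adjugate :=
    Matrix.inv_eq_right_inv (by rw [Matrix.mul_adjugate, hA.1, one_smul])
  have hiB : B⁻¹ = B.adjugate :=
    Matrix.inv_eq_right_inv (by rw [Matrix.mul_adjugate, hB.1, one_smul])
  have hAB : SU21 (A * B) := su21_mul hA hB
  have hX : SU21 (A * B * A⁻¹ * B⁻¹) :=
    su21_mul (su21_mul hAB (su21_inv_mem hA)) (su21_inv_mem hB)
  have hBAi : SU21 (B * A⁻¹) := su21_mul hB (su21_inv_mem hA)
  have t2 : (A⁻¹).trace = star a := by rw [su21_trace_inv_s9 hA, ha]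
  have t4 : (B⁻¹).trace = star b := by rw [su21_trace_inv_s9 hB, hb]
  have t6 : (B⁻¹ * A⁻¹).trace = star c := by
    rw [← Matrix.mul_inv_rev, su21_trace_inv_s9 hAB, hc]
  have t8 : (A * B⁻¹).trace = star d := by
    have h : A * B⁻¹ = (B * A⁻¹)⁻¹ := by
      rw [Matrix.mul_inv_rev, Matrix.nonsing_inv_nonsing_inv A hdA]
    rw [h, su21_trace_inv_s9 hBAi, Matrix.trace_mul_comm, ← hd]
  have hXinv : (A * B * A⁻¹ * B⁻¹)⁻¹ = B * A * B⁻¹ * A⁻¹ := by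
    rw [Matrix.mul_inv_rev, Matrix.mul_inv_rev, Matrix.mul_inv_rev,
      Matrix.nonsing_inv_nonsing_inv A hdA, Matrix.nonsing_inv_nonsing_inv B hdB]
    simp only [Matrix.mul_assoc]
  have tre : star ((A * B * A⁻¹ * B⁻¹).trace) = (B * A * B⁻¹ * A⁻¹).trace := by
    rw [← su21_trace_inv_s9 hX, hXinv]
  have hre : ((((A * B * A⁻¹ * B⁻¹).trace).re : ℂ)) =
      ((A * B * A⁻¹ * B⁻¹).trace + (B * A * B⁻¹ * A⁻¹).trace) / 2 := by
    rw [← tre]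
    rw [Complex.star_def, Complex.add_conj]
    push_cast
    ring
  have hk := key A B
  rw [← hiA, ← hiB, hA.1, hB.1, t2, t4, t6, t8, ← ha, ← hb, ← hc, ← hd] at hk
  rw [hre, hk]
  simp only [StarMul.star_mul]
  ring
end
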